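/- Let X be a finite set of points in P^{n_1} × ⋯ × P^{n_k} with Hilbert function H_X. Fix i ∈ {1,...,k} and let t_i = |π_i(X)| be the number of distinct i-th coordinates of points of X. If j = (j_1,...,j_k) ∈ N^k has j_i ≥ t_i - 1, then H_X(j_1,...,j_i,...,j_k) = H_X(j_1,...,t_i - 1,...,j_k). -/

import Mathlib

open MvPolynomial

namespace MultiProjPoints

/-- The variable set of the multigraded coordinate ring of
`ℙ^{n 0} × ⋯ × ℙ^{n (k-1)}`: variables `x_{i,j}` with `i : Fin k`, `0 ≤ j ≤ n i`. -/
abbrev Var (k : ℕ) (n : Fin k → ℕ) := Σ i : Fin k, Fin (n i + 1)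

/-- The `ℕ^k`-grading weight: `deg x_{i,j} = e_i`. -/
def wt (k : ℕ) (n : Fin k → ℕ) : Var k n → (Fin k → ℕ) := fun v => Pi.single v.1 1

/-- The `i`-th standard basis vector of `ℕ^k`. -/
def e {k : ℕ} (l : Fin k) : Fin k → ℕ := Pi.single l 1

variable (K : Type) [Field K]

/-- The graded piece `R_d` of the `ℕ^k`-graded polynomial ring. -/
noncomputable def piece (k : ℕ) (n : Fin k → ℕ) (d : Fin k → ℕ) :
    Submodule K (MvPolynomial (Var k n) K) :=
  weightedHomogeneousSubmodule K (wt k n) d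

/-- `N(d) = ∏ binom (n i + d i) (d i)`, the dimension of `R_d`. -/
def NN (k : ℕ) (n : Fin k → ℕ) (d : Fin k → ℕ) : ℕ := ∏ i, (n i + d i).choose (d i)

/-- A (representative of a) point of `ℙ^{n 0} × ⋯ × ℙ^{n (k-1)}`. -/
def PointRep (k : ℕ) (n : Fin k → ℕ) := (i : Fin k) → Fin (n i + 1) → K

/-- A valid representative: every coordinate block is nonzero. -/
def IsRep {k : ℕ} {n : Fin k → ℕ} (P : PointRep K k n) : Prop := ∀ i, P i ≠ 0

/-- Two representatives define the same point of multi-projective space. -/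
def ProjEq {k : ℕ} {n : Fin k → ℕ} (P Q : PointRep K k n) : Prop :=
  ∀ i, ∃ c : K, c ≠ 0 ∧ P i = c • Q i

/-- A tuple of representatives giving `s` distinct points. -/
def SPoints {k : ℕ} {n : Fin k → ℕ} {s : ℕ} (P : Fin s → PointRep K k n) : Prop :=
  (∀ a, IsRep K (P a)) ∧ ∀ a b, a ≠ b → ¬ ProjEq K (P a) (P b)

/-- The defining ideal `I_X` of the set of points: all polynomials vanishing on
the multi-cone over the points, i.e. the intersection of the point ideals. -/
noncomputable def idealOfPoints {k : ℕ} {n : Fin k → ℕ} {s : ℕ}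
    (P : Fin s → PointRep K k n) : Ideal (MvPolynomial (Var k n) K) :=
  ⨅ (a : Fin s), ⨅ (c : Fin k → K),
    RingHom.ker (eval (fun v : Var k n => c v.1 * P a v.1 v.2))

/-- The degree-`d` piece `I_d` of an ideal, as a `K`-subspace. -/
noncomputable def idealPiece {k : ℕ} {n : Fin k → ℕ}
    (I : Ideal (MvPolynomial (Var k n) K)) (d : Fin k → ℕ) :
    Submodule K (MvPolynomial (Var k n) K) :=
  (Submodule.restrictScalars K I) ⊓ piece K k n d

/-- The multigraded Hilbert function of `X`:
`H_X(d) = dim (R/I_X)_d = dim R_d - dim (I_X)_d`. -/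
noncomputable def hilbert {k : ℕ} {n : Fin k → ℕ} {s : ℕ}
    (P : Fin s → PointRep K k n) (d : Fin k → ℕ) : ℕ :=
  NN k n d - Module.finrank K (idealPiece K (idealOfPoints K P) d)

/-- Generic position: `s` distinct points whose Hilbert function is maximal. -/
def GenericPosition {k : ℕ} {n : Fin k → ℕ} {s : ℕ} (P : Fin s → PointRep K k n) : Prop :=
  SPoints K P ∧ ∀ d : Fin k → ℕ, hilbert K P d = min (NN k n d) s

/-- `R_{e_l}·V`: the span of all products of a variable of degree `e_l`
with an element of `V`. -/
noncomputable def mulSpan {k : ℕ} {n : Fin k → ℕ} (l : Fin k)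
    (V : Submodule K (MvPolynomial (Var k n) K)) :
    Submodule K (MvPolynomial (Var k n) K) :=
  Submodule.span K {g | ∃ (m : Fin (n l + 1)) (f : MvPolynomial (Var k n) K),
    f ∈ V ∧ g = X (⟨l, m⟩ : Var k n) * f}

/-- `D = min { i ∈ ℕ^k | N(i) > s }` (minimal elements for the componentwise order). -/
def Dset (k : ℕ) (n : Fin k → ℕ) (s : ℕ) : Set (Fin k → ℕ) :=
  {i | s < NN k n i ∧ ∀ j : Fin k → ℕ, s < NN k n j → j ≤ i → j = i}

/-- The irrelevant maximal ideal of `R`, generated by all the variables. -/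
noncomputable def irrelevant (k : ℕ) (n : Fin k → ℕ) : Ideal (MvPolynomial (Var k n) K) :=
  Ideal.span (Set.range (X : Var k n → MvPolynomial (Var k n) K))

/-- `X` has exactly `t` distinct `i`-th coordinates (as points of `ℙ^{n i}`). -/
def HasCoordCount (K : Type) [Field K] {k : ℕ} {n : Fin k → ℕ} {s : ℕ}
    (P : Fin s → PointRep K k n) (i : Fin k) (t : ℕ) : Prop :=
  ∃ Q : Fin t → (Fin (n i + 1) → K),
    (∀ b, Q b ≠ 0) ∧
    (∀ b b', b ≠ b' → ¬ ∃ c : K, c ≠ 0 ∧ Q b = c • Q b') ∧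
    (∀ a, ∃ b, ∃ c : K, c ≠ 0 ∧ P a i = c • Q b) ∧
    (∀ b, ∃ a, ∃ c : K, c ≠ 0 ∧ P a i = c • Q b)

end MultiProjPoints

/-!
`H_X(d)` is the rank of evaluation at the chosen representatives `P_a` on the forms of
multidegree `d`. Write the `i`-th coordinate of `P_a` as `c_a • Q_{β a}`, where `Q_1, …, Q_t` are
the distinct `i`-th coordinates. A monomial of multidegree `update j i m` evaluates at `P_a` to
`c_a ^ m` times the value of its `x_{i,·}`-part at `Q_{β a}` times the value of the rest. Products
of linear forms separating the `Q_b` show that forms of degree `m ≥ t - 1` in the `x_{i,·}` take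
arbitrary values at `Q_1, …, Q_t`, so the image of the forms of multidegree `update j i m` is
`c ^ m` times a space that does not depend on `m`, and multiplying by the unit `c ^ m` keeps the
dimension.
-/

lemma finrank_map_add_finrank_ker_inf {K M N : Type*} [Field K] [AddCommGroup M] [Module K M]
    [AddCommGroup N] [Module K N] (f : M →ₗ[K] N) (V : Submodule K M) [FiniteDimensional K V] :
    Module.finrank K (V.map f) + Module.finrank K ↥(LinearMap.ker f ⊓ V) = Module.finrank K V := by
  have := (f.domRestrict V).finrank_range_add_finrank_ker
  rwa [LinearMap.range_domRestrict, LinearMap.ker_domRestrict,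
    ← Submodule.finrank_map_subtype_eq, Submodule.map_comap_subtype, inf_comm] at this

lemma finrank_map_mulLeft {K A : Type*} [Field K] [Ring A] [Algebra K A] {w : A} (hw : IsUnit w)
    (W : Submodule K A) : Module.finrank K (W.map (LinearMap.mulLeft K w)) = Module.finrank K W :=
  (Submodule.equivMapOfInjective _ hw.mul_right_injective W).finrank_eq.symm

namespace MvPolynomial

variable {K σ ι : Type*} [Field K]

noncomputable def evalAt (x : ι → σ → K) : MvPolynomial σ K →ₗ[K] ι → K :=
  LinearMap.pi fun a => (aeval (x a)).toLinearMap

@[simp]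
lemma evalAt_apply (x : ι → σ → K) (p : MvPolynomial σ K) (a : ι) :
    evalAt x p a = eval (x a) p := by
  simp [evalAt]

lemma evalAt_monomial_one [Fintype σ] (x : ι → σ → K) (α : σ →₀ ℕ) (a : ι) :
    evalAt x (monomial α 1) a = ∏ v, x a v ^ α v := by
  simp [eval_monomial, Finsupp.prod_fintype]

lemma map_evalAt_weightedHomogeneousSubmodule {M : Type*} [AddCommMonoid M] (x : ι → σ → K)
    (w : σ → M) (d : M) :
    (weightedHomogeneousSubmodule K w d).map (evalAt x) =
      Submodule.span K ((fun α => evalAt x (monomial α 1)) '' {α | Finsupp.weight w α = d}) := by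
  rw [weightedHomogeneousSubmodule_eq_finsupp_supported, AddMonoidAlgebra.supported_eq_span_single,
    Submodule.map_span, ← Set.image_comp]
  rfl

lemma exists_isHomogeneous_one_eval_eq_zero_ne_zero {x y : σ → K} (hy : y ≠ 0)
    (hxy : x ∉ K ∙ y) :
    ∃ L : MvPolynomial σ K, L.IsHomogeneous 1 ∧ eval y L = 0 ∧ eval x L ≠ 0 := by
  obtain ⟨ν, hν⟩ : ∃ ν, y ν ≠ 0 := Function.ne_iff.mp hy
  obtain ⟨μ, hμ⟩ : ∃ μ, y ν * x μ - y μ * x ν ≠ 0 := by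
    by_contra! h
    refine hxy (Submodule.mem_span_singleton.mpr ⟨x ν / y ν, ?_⟩)
    ext μ
    simp only [Pi.smul_apply, smul_eq_mul]
    field_simp
    linear_combination -(h μ)
  refine ⟨C (y ν) * X μ - C (y μ) * X ν,
    (isHomogeneous_C_mul_X _ _).sub (isHomogeneous_C_mul_X _ _), ?_, ?_⟩
  · simp only [map_sub, map_mul, eval_C, eval_X]
    ring
  · simpa using hμ

variable [Fintype ι]

lemma exists_isHomogeneous_eval_ne_zero_of_pairwise {Q : ι → σ → K} (hQ0 : ∀ b, Q b ≠ 0)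
    (hQ : Pairwise fun b b' => Q b ∉ K ∙ Q b') {m : ℕ} (hm : Fintype.card ι - 1 ≤ m) (b : ι) :
    ∃ p : MvPolynomial σ K, p.IsHomogeneous m ∧ eval (Q b) p ≠ 0 ∧
      ∀ b' ≠ b, eval (Q b') p = 0 := by
  classical
  choose L hL using fun b' : {b' // b' ≠ b} =>
    exists_isHomogeneous_one_eval_eq_zero_ne_zero (hQ0 b') (hQ b'.2.symm)
  obtain ⟨μ, hμ⟩ : ∃ μ, Q b μ ≠ 0 := Function.ne_iff.mp (hQ0 b)
  refine ⟨X μ ^ (m - (Fintype.card ι - 1)) * ∏ b', L b', ?_, ?_, fun b' hb' => ?_⟩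
  · convert (isHomogeneous_X_pow μ _).mul (IsHomogeneous.prod _ _ _ fun b' _ => (hL b').1)
    simp only [Finset.sum_const, Finset.card_univ, Fintype.card_subtype_compl,
      Fintype.card_unique, smul_eq_mul, mul_one]
    omega
  · simp only [map_mul, map_pow, eval_X, map_prod]
    exact mul_ne_zero (pow_ne_zero _ hμ) (Finset.prod_ne_zero_iff.mpr fun b' _ => (hL b').2.2)
  · simp only [map_mul, map_prod]
    exact mul_eq_zero_of_right _ <|
      Finset.prod_eq_zero (i := ⟨b', hb'⟩) (Finset.mem_univ _) (hL ⟨b', hb'⟩).2.1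

theorem map_evalAt_homogeneousSubmodule_eq_top {Q : ι → σ → K} (hQ0 : ∀ b, Q b ≠ 0)
    (hQ : Pairwise fun b b' => Q b ∉ K ∙ Q b') {m : ℕ} (hm : Fintype.card ι - 1 ≤ m) :
    (homogeneousSubmodule σ K m).map (evalAt Q) = ⊤ := by
  classical
  rw [eq_top_iff, ← (Pi.basisFun K ι).span_eq, Submodule.span_le]
  rintro _ ⟨b, rfl⟩
  obtain ⟨p, hp, hpb, hpb'⟩ := exists_isHomogeneous_eval_ne_zero_of_pairwise hQ0 hQ hm b
  refine ⟨(eval (Q b) p)⁻¹ • p, Submodule.smul_mem _ _ hp, ?_⟩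
  ext b'
  obtain rfl | hb' := eq_or_ne b' b
  · simp [hpb]
  · simp [hpb' b' hb', hb']

end MvPolynomial

namespace MultiProjPoints

variable {K : Type} [Field K] {k : ℕ} {n : Fin k → ℕ}

lemma weight_wt_apply (α : Var k n →₀ ℕ) (l : Fin k) :
    Finsupp.weight (wt k n) α l = ∑ μ, α ⟨l, μ⟩ := by
  rw [Finsupp.weight_apply, Finsupp.sum_fintype _ _ (by simp), Finset.sum_apply,
    Fintype.sum_sigma, Fintype.sum_eq_single l fun l' hl' => by simp [wt, Ne.symm hl']]
  simp [wt]

noncomputable def weightEqEquivPi (d : Fin k → ℕ) :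
    {α : Var k n →₀ ℕ // Finsupp.weight (wt k n) α = d} ≃
      Π l, (Finset.univ.finsuppAntidiag (d l) : Finset (Fin (n l + 1) →₀ ℕ)) :=
  (Finsupp.sigmaFinsuppEquivPiFinsupp.subtypeEquiv fun α => by
      simp only [funext_iff, weight_wt_apply, Finset.mem_finsuppAntidiag, Finset.subset_univ,
        and_true]
      rfl).trans
    Equiv.subtypePiEquivPi

lemma piece_eq_restrictSupport (d : Fin k → ℕ) :
    piece K k n d = restrictSupport K {α | Finsupp.weight (wt k n) α = d} :=
  weightedHomogeneousSubmodule_eq_finsupp_supported K _ d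

instance (d : Fin k → ℕ) : FiniteDimensional K (piece K k n d) := by
  rw [piece_eq_restrictSupport]
  have : Finite {α : Var k n →₀ ℕ | Finsupp.weight (wt k n) α = d} :=
    .of_equiv _ (weightEqEquivPi d).symm
  exact .of_basis (basisRestrictSupport K _)

lemma finrank_piece (d : Fin k → ℕ) : Module.finrank K (piece K k n d) = NN k n d := by
  rw [piece_eq_restrictSupport, Module.finrank_eq_nat_card_basis (basisRestrictSupport K _),
    Set.coe_ofPred, Nat.card_congr (weightEqEquivPi d), Nat.card_pi, NN]
  refine Finset.prod_congr rfl fun l _ => ?_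
  rw [Nat.card_eq_finsetCard, Finset.card_finsuppAntidiag_nat_eq_choose, Finset.card_univ,
    Fintype.card_fin, Nat.add_right_comm, Nat.add_sub_cancel]

lemma prod_pow_weight_wt {M : Type*} [CommMonoid M] (c : Fin k → M) (α : Var k n →₀ ℕ) :
    ∏ v : Var k n, c v.1 ^ α v = ∏ l, c l ^ Finsupp.weight (wt k n) α l := by
  simp [Fintype.prod_sigma, Finset.prod_pow_eq_pow_sum, weight_wt_apply]

lemma eval_scale_blocks {d : Fin k → ℕ} {f : MvPolynomial (Var k n) K}
    (hf : f ∈ piece K k n d) (c : Fin k → K) (x : Var k n → K) :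
    eval (fun v => c v.1 * x v) f = (∏ l, c l ^ d l) * eval x f := by
  rw [eval_eq', eval_eq', Finset.mul_sum]
  refine Finset.sum_congr rfl fun α hα => ?_
  simp_rw [mul_pow, Finset.prod_mul_distrib, prod_pow_weight_wt, hf (mem_support_iff.mp hα)]
  ring

variable {s : ℕ}

def pointCoords (P : Fin s → PointRep K k n) : Fin s → Var k n → K := fun a v => P a v.1 v.2

lemma mem_idealOfPoints_iff {P : Fin s → PointRep K k n} {d : Fin k → ℕ}
    {f : MvPolynomial (Var k n) K} (hf : f ∈ piece K k n d) :
    f ∈ idealOfPoints K P ↔ evalAt (pointCoords P) f = 0 := by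
  simp only [idealOfPoints, Ideal.mem_iInf, RingHom.mem_ker, funext_iff, evalAt_apply,
    Pi.zero_apply]
  refine ⟨fun h a => (by simpa using h a 1 : eval (fun v => P a v.1 v.2) f = 0), fun h a c => ?_⟩
  exact (eval_scale_blocks hf c (pointCoords P a)).trans (by rw [h a, mul_zero])

lemma idealPiece_idealOfPoints (P : Fin s → PointRep K k n) (d : Fin k → ℕ) :
    idealPiece K (idealOfPoints K P) d =
      LinearMap.ker (evalAt (pointCoords P)) ⊓ piece K k n d := by
  ext f
  simp only [idealPiece, Submodule.mem_inf, Submodule.restrictScalars_mem, LinearMap.mem_ker]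
  exact ⟨fun ⟨h, hf⟩ => ⟨(mem_idealOfPoints_iff hf).mp h, hf⟩,
    fun ⟨h, hf⟩ => ⟨(mem_idealOfPoints_iff hf).mpr h, hf⟩⟩

lemma hilbert_eq_finrank_map (P : Fin s → PointRep K k n) (d : Fin k → ℕ) :
    hilbert K P d = Module.finrank K ((piece K k n d).map (evalAt (pointCoords P))) := by
  have := finrank_map_add_finrank_ker_inf (evalAt (pointCoords P)) (piece K k n d)
  rw [hilbert, idealPiece_idealOfPoints, finrank_piece] at *
  omega

section Blocks

variable {i : Fin k}

noncomputable def replaceBlock (α : Var k n →₀ ℕ) (i : Fin k) (g : Fin (n i + 1) →₀ ℕ) :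
    Var k n →₀ ℕ :=
  Finsupp.sigmaFinsuppEquivPiFinsupp.symm
    (Function.update (Finsupp.sigmaFinsuppEquivPiFinsupp α) i g)

lemma replaceBlock_apply (α : Var k n →₀ ℕ) (g : Fin (n i + 1) →₀ ℕ) (v : Var k n) :
    replaceBlock α i g v =
      Function.update (Finsupp.sigmaFinsuppEquivPiFinsupp α) i g v.1 v.2 := by
  rw [← Finsupp.sigmaFinsuppEquivPiFinsupp_apply, replaceBlock, Equiv.apply_symm_apply]

@[simp]
lemma replaceBlock_apply_self (α : Var k n →₀ ℕ) (g : Fin (n i + 1) →₀ ℕ) (μ : Fin (n i + 1)) :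
    replaceBlock α i g ⟨i, μ⟩ = g μ := by
  simp [replaceBlock_apply]

@[simp]
lemma replaceBlock_apply_of_ne (α : Var k n →₀ ℕ) (g : Fin (n i + 1) →₀ ℕ) {l : Fin k}
    (hl : l ≠ i) (μ : Fin (n l + 1)) : replaceBlock α i g ⟨l, μ⟩ = α ⟨l, μ⟩ := by
  simp [replaceBlock_apply, hl]

lemma weight_replaceBlock (α : Var k n →₀ ℕ) (g : Fin (n i + 1) →₀ ℕ) :
    Finsupp.weight (wt k n) (replaceBlock α i g) =
      Function.update (Finsupp.weight (wt k n) α) i g.degree := by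
  funext l
  obtain rfl | hl := eq_or_ne l i
  · simp [weight_wt_apply, Finsupp.degree_eq_sum]
  · simp [weight_wt_apply, hl]

noncomputable def restEval (P : Fin s → PointRep K k n) (i : Fin k) (α : Var k n →₀ ℕ) :
    Fin s → K :=
  fun a => ∏ l ∈ Finset.univ.erase i, ∏ μ, P a l μ ^ α ⟨l, μ⟩

lemma restEval_replaceBlock (P : Fin s → PointRep K k n) (α : Var k n →₀ ℕ)
    (g : Fin (n i + 1) →₀ ℕ) : restEval P i (replaceBlock α i g) = restEval P i α := by
  funext a
  refine Finset.prod_congr rfl fun l hl => ?_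
  simp [Finset.ne_of_mem_erase hl]

variable {t : ℕ} {P : Fin s → PointRep K k n} {Q : Fin t → Fin (n i + 1) → K}
  {β : Fin s → Fin t} {c : Fin s → K}

lemma evalAt_pointCoords_monomial (hc : ∀ a, P a i = c a • Q (β a)) (α : Var k n →₀ ℕ)
    (a : Fin s) :
    evalAt (pointCoords P) (monomial α 1) a = c a ^ Finsupp.weight (wt k n) α i *
      ((∏ μ, Q (β a) μ ^ α ⟨i, μ⟩) * restEval P i α a) := by
  rw [evalAt_monomial_one, Fintype.prod_sigma, ← Finset.mul_prod_erase _ _ (Finset.mem_univ i),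
    weight_wt_apply, ← Finset.prod_pow_eq_pow_sum, ← mul_assoc, ← Finset.prod_mul_distrib]
  simp [pointCoords, restEval, hc, mul_pow]

lemma evalAt_pointCoords_monomial_replaceBlock (hc : ∀ a, P a i = c a • Q (β a))
    (α : Var k n →₀ ℕ) (g : Fin (n i + 1) →₀ ℕ) :
    evalAt (pointCoords P) (monomial (replaceBlock α i g) 1) =
      c ^ g.degree * ((evalAt Q (monomial g 1) ∘ β) * restEval P i α) := by
  funext a
  simp [evalAt_pointCoords_monomial hc, weight_replaceBlock, restEval_replaceBlock,
    eval_monomial, Finsupp.prod_fintype]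

noncomputable def restSpan (P : Fin s → PointRep K k n) (i : Fin k) (β : Fin s → Fin t)
    (j : Fin k → ℕ) : Submodule K (Fin s → K) :=
  Submodule.span K {v | ∃ (y : Fin t → K) (α : Var k n →₀ ℕ),
    (∀ l ≠ i, Finsupp.weight (wt k n) α l = j l) ∧ v = (y ∘ β) * restEval P i α}

lemma mul_restEval_mem_map_evalAt_piece (hc : ∀ a, P a i = c a • Q (β a))
    (hQ0 : ∀ b, Q b ≠ 0) (hQ : Pairwise fun b b' => Q b ∉ K ∙ Q b') {j : Fin k → ℕ} {m : ℕ}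
    (hm : t - 1 ≤ m) {α : Var k n →₀ ℕ} (hα : ∀ l ≠ i, Finsupp.weight (wt k n) α l = j l)
    (y : Fin t → K) :
    c ^ m * ((y ∘ β) * restEval P i α) ∈
      (piece K k n (Function.update j i m)).map (evalAt (pointCoords P)) := by
  let φ := LinearMap.mulLeft K (c ^ m) ∘ₗ LinearMap.mulRight K (restEval P i α) ∘ₗ
    LinearMap.funLeft K K β
  suffices (homogeneousSubmodule (Fin (n i + 1)) K m).map (evalAt Q) ≤
      ((piece K k n (Function.update j i m)).map (evalAt (pointCoords P))).comap φ by
    rw [map_evalAt_homogeneousSubmodule_eq_top hQ0 hQ (by simpa using hm)] at this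
    exact this Submodule.mem_top
  rw [← weightedHomogeneousSubmodule_one, map_evalAt_weightedHomogeneousSubmodule,
    Submodule.span_le]
  rintro _ ⟨g, hg : Finsupp.weight 1 g = m, rfl⟩
  replace hg : g.degree = m := by rwa [Finsupp.degree_eq_weight_one]
  refine ⟨monomial (replaceBlock α i g) 1, isWeightedHomogeneous_monomial _ _ _ ?_, ?_⟩
  · rw [weight_replaceBlock, hg]
    funext l
    obtain rfl | hl := eq_or_ne l i
    · simp
    · simp [hα l hl, hl]
  · rw [evalAt_pointCoords_monomial_replaceBlock hc, hg]
    rfl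

theorem map_evalAt_piece_update (hc : ∀ a, P a i = c a • Q (β a)) (hQ0 : ∀ b, Q b ≠ 0)
    (hQ : Pairwise fun b b' => Q b ∉ K ∙ Q b') (j : Fin k → ℕ) {m : ℕ} (hm : t - 1 ≤ m) :
    (piece K k n (Function.update j i m)).map (evalAt (pointCoords P)) =
      (restSpan P i β j).map (LinearMap.mulLeft K (c ^ m)) := by
  refine le_antisymm ?_ ?_
  · rw [piece, map_evalAt_weightedHomogeneousSubmodule, Submodule.span_le]
    rintro _ ⟨α, hα : Finsupp.weight (wt k n) α = _, rfl⟩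
    refine ⟨_, Submodule.subset_span ⟨fun b => ∏ μ, Q b μ ^ α ⟨i, μ⟩, α,
      fun l hl => by simp [hα, hl], rfl⟩, funext fun a => ?_⟩
    simp [evalAt_pointCoords_monomial hc, hα]
  · rw [restSpan, Submodule.map_span, Submodule.span_le]
    rintro _ ⟨_, ⟨y, α, hα, rfl⟩, rfl⟩
    exact mul_restEval_mem_map_evalAt_piece hc hQ0 hQ hm hα y

end Blocks

theorem hilbert_stabilizes_general (K : Type) [Field K]
    (k : ℕ) (n : Fin k → ℕ) {s : ℕ} (P : Fin s → PointRep K k n)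
    (i : Fin k) (t : ℕ) (ht : HasCoordCount K P i t)
    (j : Fin k → ℕ) (hj : t - 1 ≤ j i) :
    hilbert K P j = hilbert K P (Function.update j i (t - 1)) := by
  obtain ⟨Q, hQ0, hQ, hPQ, -⟩ := ht
  choose β c hc0 hc using hPQ
  have hQ' : Pairwise fun b b' => Q b ∉ K ∙ Q b' := fun b b' hbb' hb => by
    obtain ⟨r, hr⟩ := Submodule.mem_span_singleton.mp hb
    exact hQ b b' hbb' ⟨r, by rintro rfl; exact hQ0 b (by rw [← hr, zero_smul]), hr.symm⟩
  have hcu (m : ℕ) : IsUnit (c ^ m) := Pi.isUnit_iff.mpr fun a => (hc0 a).isUnit.pow m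
  conv_lhs => rw [← Function.update_eq_self i j]
  rw [hilbert_eq_finrank_map, hilbert_eq_finrank_map,
    map_evalAt_piece_update hc hQ0 hQ' j hj, map_evalAt_piece_update hc hQ0 hQ' j le_rfl,
    finrank_map_mulLeft (hcu _), finrank_map_mulLeft (hcu _)]

theorem hilbert_stabilizes (K : Type) [Field K] [IsAlgClosed K] [CharZero K]
    (k : ℕ) (n : Fin k → ℕ) {s : ℕ} (P : Fin s → PointRep K k n) (hP : SPoints K P)
    (i : Fin k) (t : ℕ) (ht : HasCoordCount K P i t)
    (j : Fin k → ℕ) (hj : t - 1 ≤ j i) :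
    hilbert K P j = hilbert K P (Function.update j i (t - 1)) :=
  hilbert_stabilizes_general K k n P i t ht j hj

end MultiProjPoints
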